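/- Let 0 ≤ s₁ < s₂ < … < s_N ≤ 1 and let f₁,…,f_s ∈ L²([0,1]) be an orthonormal family contained in the linear span of 𝟙_{[s₁,s₂]}, …, 𝟙_{[s_{N−1},s_N]}. Then for every k ≥ 2 there exists a constant c > 0, depending on s₁,…,s_N, such that for all (t₁,…,t_k) ∈ Δ_k, G(𝟙_{[t₁,t₂]}, …, 𝟙_{[t_{k−1},t_k]}, f₁, …, f_s) ≥ c · G(𝟙_{[t₁,t₂]}, …, 𝟙_{[t_{k−1},t_k]}, 𝟙_{[s₁,s₂]}, …, 𝟙_{[s_{N−1},s_N]}). -/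

import Mathlib

open MeasureTheory

noncomputable def μ01 : Measure ℝ := volume.restrict (Set.Icc 0 1)

noncomputable abbrev L2 : Type := Lp ℝ 2 μ01

lemma μ01_Icc_ne_top (a b : ℝ) : μ01 (Set.Icc a b) ≠ ⊤ :=
  ((Measure.restrict_apply_le _ _).trans_lt measure_Icc_lt_top).ne

/-- The element of `L²([0,1])` given by the indicator of `[a,b]`. -/
noncomputable def ind (a b : ℝ) : L2 :=
  indicatorConstLp 2 measurableSet_Icc (μ01_Icc_ne_top a b) (1 : ℝ)

/-- Gram determinant of a finite family of vectors. -/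
noncomputable def gram {H : Type*} [NormedAddCommGroup H] [InnerProductSpace ℝ H]
    {n : ℕ} (v : Fin n → H) : ℝ :=
  (Matrix.of fun i j => (inner ℝ (v i) (v j) : ℝ)).det

/-!
Let `v` be the step functions on the intervals `[s_j, s_{j+1}]`. Since `f` is orthonormal and
spans a subspace of the span of `v`, `G(v, u) ≤ G(v) · G(f, u)` for every finite family `u`, so
`c = 1 / (1 + G(v))` works. The inequality is proved by adding the vectors of `u` one at a time:
appending `x` to a family multiplies its Gram determinant by the squared distance from `x` to the
span of the family, and the span of `(f, u)` lies inside that of `(v, u)`, so its distance to `x`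
is the larger one.
-/

lemma Fin.range_append {α : Type*} {m n : ℕ} (a : Fin m → α) (b : Fin n → α) :
    Set.range (Fin.append a b) = Set.range a ∪ Set.range b := by
  ext y
  constructor
  · rintro ⟨i, rfl⟩
    refine Fin.addCases (fun i => ?_) (fun i => ?_) i <;> simp
  · rintro (⟨i, rfl⟩ | ⟨i, rfl⟩)
    exacts [⟨Fin.castAdd n i, Fin.append_left a b i⟩, ⟨Fin.natAdd m i, Fin.append_right a b i⟩]

section Gram

variable {H : Type*} [NormedAddCommGroup H] [InnerProductSpace ℝ H]

lemma gram_eq_det_gram {n : ℕ} (v : Fin n → H) : gram v = (Matrix.gram ℝ v).det := rfl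

lemma gram_nonneg {n : ℕ} (v : Fin n → H) : 0 ≤ gram v :=
  (Matrix.posSemidef_gram ℝ v).det_nonneg

lemma gram_comp_equiv {n m : ℕ} (e : Fin n ≃ Fin m) (v : Fin m → H) :
    gram (v ∘ e) = gram v :=
  Matrix.det_submatrix_equiv_self e (Matrix.gram ℝ v)

lemma gram_append_comm {m n : ℕ} (a : Fin m → H) (b : Fin n → H) :
    gram (Fin.append a b) = gram (Fin.append b a) := by
  have h : Fin.append b a ∘ finAddFlip = Fin.append a b := by
    funext i
    refine Fin.addCases (fun i => ?_) (fun i => ?_) i <;> simp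
  rw [← h, gram_comp_equiv]

lemma det_gram_update_sum {ι : Type*} [Fintype ι] [DecidableEq ι] (v : ι → H) (j : ι)
    (c : ι → ℝ) :
    (Matrix.gram ℝ (Function.update v j (∑ k, c k • v k))).det
      = c j ^ 2 * (Matrix.gram ℝ v).det := by
  set A := Matrix.gram ℝ v
  set A' := A.updateRow j (∑ k, c k • A k)
  have hA' : Matrix.gram ℝ (Function.update v j (∑ k, c k • v k))
      = A'.updateCol j (fun i => ∑ k, c k • A' i k) := by
    ext i l
    by_cases hi : i = j <;> by_cases hl : l = j <;>
      simp only [A', A, Matrix.gram_apply, Function.update_apply, Matrix.updateRow_apply,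
        Matrix.updateCol_apply, hi, hl, if_true, if_false, Finset.sum_apply, Pi.smul_apply,
        smul_eq_mul, sum_inner, inner_sum, real_inner_smul_left, real_inner_smul_right,
        Finset.mul_sum]
  rw [hA', Matrix.det_updateCol_sum, Matrix.det_updateRow_sum, smul_eq_mul, smul_eq_mul, sq,
    mul_assoc]

lemma gram_snoc_add_of_mem_span {n : ℕ} (w : Fin n → H) (x : H) {y : H}
    (hy : y ∈ Submodule.span ℝ (Set.range w)) :
    gram (Fin.snoc w (x + y)) = gram (Fin.snoc w x) := by
  obtain ⟨c, rfl⟩ := (Submodule.mem_span_range_iff_exists_fun ℝ).1 hy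
  have h : Fin.snoc w (x + ∑ i, c i • w i) =
      Function.update (Fin.snoc w x : Fin (n + 1) → H) (Fin.last n)
        (∑ k, (Fin.snoc c 1 : Fin (n + 1) → ℝ) k • (Fin.snoc w x : Fin (n + 1) → H) k) := by
    rw [Fin.update_snoc_last, Fin.sum_univ_castSucc]
    simp [add_comm]
  rw [h, gram_eq_det_gram, det_gram_update_sum]
  simp [gram_eq_det_gram]

lemma gram_snoc_of_forall_inner_eq_zero {n : ℕ} (w : Fin n → H) (z : H)
    (hz : ∀ i, inner ℝ z (w i) = 0) :
    gram (Fin.snoc w z) = gram w * ‖z‖ ^ 2 := by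
  rw [mul_comm, gram_eq_det_gram, Matrix.det_succ_row _ (Fin.last n), Fin.sum_univ_castSucc]
  simp [hz, Fin.succAbove_last, Matrix.submatrix, Matrix.gram, gram]

lemma gram_snoc_eq_mul_infDist_sq {n : ℕ} (w : Fin n → H) (x : H) :
    gram (Fin.snoc w x) =
      gram w * Metric.infDist x (Submodule.span ℝ (Set.range w) : Set H) ^ 2 := by
  set K := Submodule.span ℝ (Set.range w)
  have : FiniteDimensional ℝ K := FiniteDimensional.span_of_finite ℝ (Set.finite_range w)
  have hdist : Metric.infDist x (K : Set H) = ‖x - K.starProjection x‖ := by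
    rw [Metric.infDist_eq_iInf, K.starProjection_minimal]
    simp [dist_eq_norm]
  have horth : ∀ i, inner ℝ (x - K.starProjection x) (w i) = 0 := fun i =>
    K.inner_left_of_mem_orthogonal (Submodule.subset_span ⟨i, rfl⟩)
      (K.sub_starProjection_mem_orthogonal x)
  calc gram (Fin.snoc w x)
        = gram (Fin.snoc w ((x - K.starProjection x) + K.starProjection x)) := by
          rw [sub_add_cancel]
    _ = gram (Fin.snoc w (x - K.starProjection x)) :=
        gram_snoc_add_of_mem_span w _ (K.starProjection_apply_mem x)
    _ = _ := by rw [gram_snoc_of_forall_inner_eq_zero w _ horth, hdist]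


lemma gram_append_mul_le {N s : ℕ} (v : Fin N → H) (f : Fin s → H)
    (hfv : Submodule.span ℝ (Set.range f) ≤ Submodule.span ℝ (Set.range v)) :
    ∀ {m : ℕ} (u : Fin m → H), gram (Fin.append v u) * gram f ≤ gram v * gram (Fin.append f u)
  | 0, u => by
    rw [Subsingleton.elim u Fin.elim0, Fin.append_elim0, Fin.append_elim0]
    simp
  | m + 1, u => by
    rw [← Fin.snoc_init_self u, Fin.append_snoc, Fin.append_snoc,
      gram_snoc_eq_mul_infDist_sq, gram_snoc_eq_mul_infDist_sq]
    have hspan : Submodule.span ℝ (Set.range (Fin.append f (Fin.init u)))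
        ≤ Submodule.span ℝ (Set.range (Fin.append v (Fin.init u))) := by
      simp only [Fin.range_append, Submodule.span_union]
      exact sup_le_sup_right hfv _
    have hdist := Metric.infDist_le_infDist_of_subset (x := u (Fin.last m)) hspan
      ⟨0, Submodule.zero_mem _⟩
    calc gram (Fin.append v (Fin.init u)) * _ ^ 2 * gram f
        = gram (Fin.append v (Fin.init u)) * gram f * _ ^ 2 := by ring
      _ ≤ gram v * gram (Fin.append f (Fin.init u)) * _ ^ 2 :=
        mul_le_mul_of_nonneg_right (gram_append_mul_le v f hfv _) (sq_nonneg _)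
      _ ≤ gram v * gram (Fin.append f (Fin.init u)) * _ ^ 2 :=
        mul_le_mul_of_nonneg_left (pow_le_pow_left₀ Metric.infDist_nonneg hdist 2)
          (mul_nonneg (gram_nonneg _) (gram_nonneg _))
      _ = _ := by ring

end Gram

theorem gram_with_step_basis_ge_general
    {N : ℕ} (sp : Fin (N + 1) → ℝ)
    {s : ℕ} (f : Fin s → L2) (hf : Orthonormal ℝ f)
    (hfspan : ∀ i, f i ∈ Submodule.span ℝ
      (Set.range fun j : Fin N => ind (sp j.castSucc) (sp j.succ)))
    (k : ℕ) :
    ∃ c : ℝ, 0 < c ∧ ∀ t : Fin (k + 2) → ℝ,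
      0 ≤ t 0 → t (Fin.last (k + 1)) ≤ 1 → Monotone t →
      c * gram (Fin.append (fun j : Fin (k + 1) => ind (t j.castSucc) (t j.succ))
            (fun j : Fin N => ind (sp j.castSucc) (sp j.succ))) ≤
        gram (Fin.append (fun j : Fin (k + 1) => ind (t j.castSucc) (t j.succ)) f) := by
  set v : Fin N → L2 := fun j => ind (sp j.castSucc) (sp j.succ)
  have hc : 0 < 1 + gram v := by linarith [gram_nonneg v]
  refine ⟨(1 + gram v)⁻¹, inv_pos.2 hc, fun t _ _ _ => ?_⟩
  set u : Fin (k + 1) → L2 := fun j => ind (t j.castSucc) (t j.succ)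
  have hgram := gram_append_mul_le v f (Submodule.span_le.2 (Set.range_subset_iff.2 hfspan)) u
  rw [gram_eq_det_gram f, Matrix.gram_eq_one_iff_orthonormal.2 hf, Matrix.det_one, mul_one,
    gram_append_comm v, gram_append_comm f] at hgram
  rw [inv_mul_le_iff₀ hc]
  exact hgram.trans (mul_le_mul_of_nonneg_right (by linarith) (gram_nonneg _))

/-- Lemma 8. Let `0 ≤ s₁ < … < s_N ≤ 1` (here `N + 1` points `sp`)
and let `f₁,…,f_s` be an orthonormal family contained in the span of
`𝟙_{[s₁,s₂]},…,𝟙_{[s_{N-1},s_N]}`. Then for every `k ≥ 2` there is a `c > 0`, depending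
on the `s_j`, such that for all `(t₁,…,t_k) ∈ Δ_k`,
`G(𝟙_{[t₁,t₂]},…,𝟙_{[t_{k-1},t_k]}, f₁,…,f_s) ≥
c·G(𝟙_{[t₁,t₂]},…,𝟙_{[t_{k-1},t_k]}, 𝟙_{[s₁,s₂]},…,𝟙_{[s_{N-1},s_N]})`. -/
theorem gram_with_step_basis_ge
    {N : ℕ} (sp : Fin (N + 1) → ℝ) (h0 : 0 ≤ sp 0) (hmono : StrictMono sp)
    (h1 : sp (Fin.last N) ≤ 1)
    {s : ℕ} (f : Fin s → L2) (hf : Orthonormal ℝ f)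
    (hfspan : ∀ i, f i ∈ Submodule.span ℝ
      (Set.range fun j : Fin N => ind (sp j.castSucc) (sp j.succ)))
    (k : ℕ) :
    ∃ c : ℝ, 0 < c ∧ ∀ t : Fin (k + 2) → ℝ,
      0 ≤ t 0 → t (Fin.last (k + 1)) ≤ 1 → Monotone t →
      c * gram (Fin.append (fun j : Fin (k + 1) => ind (t j.castSucc) (t j.succ))
            (fun j : Fin N => ind (sp j.castSucc) (sp j.succ))) ≤
        gram (Fin.append (fun j : Fin (k + 1) => ind (t j.castSucc) (t j.succ)) f) :=
  gram_with_step_basis_ge_general sp f hf hfspan k
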